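/- Quantitative Harnack implies connectedness: let D ⊂ ℝ^m be open, non-empty, with |D| < ∞, and suppose its Neumann heat kernel satisfies sup_{x,y∈D} |π_D(x,y;t) − 1/|D|| ≤ c₁ e^{−c₂ t} for all t ≥ t₁, with c₁ < ∞, c₂ > 0. Then D is connected. -/

import Mathlib

open MeasureTheory Filter

/-!
For large `t` the estimate forces `π(x, ·, t) ≥ 1/|D| − c₁e^{−c₂t} > 0` on all of `D`. Since
the heat started at `x` has total mass `1` both on `D` and on the component `C` of `x`, the
integral of this positive function over the open set `D \ C` vanishes, so `D \ C` is empty.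
-/

section

variable {X : Type*} [TopologicalSpace X]

theorem IsOpen.diff_connectedComponentIn [LocallyConnectedSpace X] {F : Set X} (hF : IsOpen F)
    (x : X) : IsOpen (F \ connectedComponentIn F x) := by
  rw [isOpen_iff_mem_nhds]
  rintro w ⟨hwF, hwC⟩
  filter_upwards [connectedComponentIn_mem_nhds (hF.mem_nhds hwF)] with u hu
  refine ⟨connectedComponentIn_subset F w hu, fun huC => hwC ?_⟩
  rw [connectedComponentIn_eq huC, ← connectedComponentIn_eq hu]
  exact mem_connectedComponentIn hwF

variable [MeasurableSpace X] [OpensMeasurableSpace X] {μ : Measure X} [μ.IsOpenPosMeasure]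

theorem IsOpen.setIntegral_pos {s : Set X} {f : X → ℝ} (hs : IsOpen s) (hne : s.Nonempty)
    (hf : IntegrableOn f s μ) (hpos : ∀ x ∈ s, 0 < f x) : 0 < ∫ x in s, f x ∂μ := by
  rw [setIntegral_pos_iff_support_of_nonneg_ae
    ((ae_restrict_mem hs.measurableSet).mono fun x hx => (hpos x hx).le) hf]
  refine (hs.measure_pos μ hne).trans_le (measure_mono fun x hx => ⟨?_, hx⟩)
  exact (hpos x hx).ne'

theorem subset_of_setIntegral_eq {s t : Set X} {f : X → ℝ} (hts : t ⊆ s) (hst : IsOpen (s \ t))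
    (hf : IntegrableOn f s μ) (hpos : ∀ x ∈ s, 0 < f x)
    (heq : ∫ x in t, f x ∂μ = ∫ x in s, f x ∂μ) : s ⊆ t := by
  by_contra hsub
  have hsplit : ∫ x in s, f x ∂μ = (∫ x in t, f x ∂μ) + ∫ x in s \ t, f x ∂μ := by
    conv_lhs => rw [← Set.union_sdiff_cancel hts]
    exact setIntegral_union Set.disjoint_sdiff_right hst.measurableSet
      (hf.mono_set hts) (hf.mono_set Set.sdiff_subset)
  have hdiff : 0 < ∫ x in s \ t, f x ∂μ :=
    hst.setIntegral_pos (Set.sdiff_nonempty.mpr hsub) (hf.mono_set Set.sdiff_subset)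
      fun x hx => hpos x hx.1
  linarith

theorem IsOpen.isConnected_of_setIntegral_connectedComponentIn_eq [LocallyConnectedSpace X]
    {F : Set X} {x : X} {f : X → ℝ} (hF : IsOpen F) (hx : x ∈ F) (hf : IntegrableOn f F μ)
    (hpos : ∀ y ∈ F, 0 < f y) (heq : ∫ y in connectedComponentIn F x, f y ∂μ = ∫ y in F, f y ∂μ) :
    IsConnected F := by
  have hFC : F = connectedComponentIn F x :=
    (subset_of_setIntegral_eq (connectedComponentIn_subset F x) (hF.diff_connectedComponentIn x)
      hf hpos heq).antisymm (connectedComponentIn_subset F x)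
  rw [hFC]
  exact isConnected_connectedComponentIn_iff.mpr hx

end

theorem eventually_mul_exp_neg_lt (c₁ : ℝ) {c₂ a : ℝ} (hc₂ : 0 < c₂) (ha : 0 < a) :
    ∀ᶠ t in atTop, c₁ * Real.exp (-c₂ * t) < a := by
  have hdecay : Tendsto (fun t => c₁ * Real.exp (-c₂ * t)) atTop (nhds 0) := by
    simpa using ((Real.tendsto_exp_neg_atTop_nhds_zero.comp
      (tendsto_id.const_mul_atTop hc₂)).const_mul c₁)
  exact hdecay.eventually_lt_const ha

theorem harnack_implies_connected_general
    {m : ℕ} (D : Set (EuclideanSpace ℝ (Fin m)))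
    (hD : IsOpen D) (hne : D.Nonempty) (hDfin : volume D < ⊤)
    (π : EuclideanSpace ℝ (Fin m) → EuclideanSpace ℝ (Fin m) → ℝ → ℝ)
    (hcons : ∀ x ∈ D, ∀ t > (0 : ℝ), ∫ y in D, π x y t = 1)
    (hloc : ∀ x ∈ D, ∀ t > (0 : ℝ),
      ∫ y in connectedComponentIn D x, π x y t = 1)
    (t₁ c₁ c₂ : ℝ) (hc₂ : 0 < c₂)
    (hest : ∀ t, t₁ ≤ t → ∀ x ∈ D, ∀ y ∈ D,
      |π x y t - 1 / (volume D).toReal| ≤ c₁ * Real.exp (-c₂ * t)) :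
    IsConnected D := by
  have hdensity : 0 < 1 / (volume D).toReal :=
    one_div_pos.mpr (ENNReal.toReal_pos (hD.measure_pos volume hne).ne' hDfin.ne)
  obtain ⟨x, hx⟩ := hne
  obtain ⟨t, hsmall, ht₁t, ht⟩ := ((eventually_mul_exp_neg_lt c₁ hc₂ hdensity).and
    ((eventually_ge_atTop t₁).and (eventually_gt_atTop 0))).exists
  refine hD.isConnected_of_setIntegral_connectedComponentIn_eq hx
    (integrable_of_integral_eq_one (hcons x hx t ht)) (fun y hy => ?_)
    ((hloc x hx t ht).trans (hcons x hx t ht).symm)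
  linarith [(abs_le.mp (hest t ht₁t x hx y hy)).1]

/-- quantitative Harnack implies connectedness. Let `D ⊆ ℝ^m` be
open, nonempty, of finite measure, and let `π` be its Neumann heat kernel:
it conserves mass and heat started in a connected component stays in that
component. If `sup_{x,y∈D} |π(x,y;t) − 1/|D|| ≤ c₁ e^{−c₂t}` for `t ≥ t₁` with
`c₂ > 0`, then `D` is connected. -/
theorem harnack_implies_connected
    {m : ℕ} (D : Set (EuclideanSpace ℝ (Fin m)))
    (hD : IsOpen D) (hne : D.Nonempty) (hDfin : volume D < ⊤)
    (π : EuclideanSpace ℝ (Fin m) → EuclideanSpace ℝ (Fin m) → ℝ → ℝ)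
    (hnonneg : ∀ x ∈ D, ∀ y ∈ D, ∀ t > (0 : ℝ), 0 ≤ π x y t)
    (hmeas : ∀ x ∈ D, ∀ t > (0 : ℝ), Measurable (fun y => π x y t))
    (hcons : ∀ x ∈ D, ∀ t > (0 : ℝ), ∫ y in D, π x y t = 1)
    (hloc : ∀ x ∈ D, ∀ t > (0 : ℝ),
      ∫ y in connectedComponentIn D x, π x y t = 1)
    (t₁ c₁ c₂ : ℝ) (ht₁ : 0 < t₁) (hc₂ : 0 < c₂)
    (hest : ∀ t, t₁ ≤ t → ∀ x ∈ D, ∀ y ∈ D,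
      |π x y t - 1 / (volume D).toReal| ≤ c₁ * Real.exp (-c₂ * t)) :
    IsConnected D :=
  harnack_implies_connected_general D hD hne hDfin π hcons hloc t₁ c₁ c₂ hc₂ hest
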